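/- arXiv:1506.00133 — 11 statements merged into one kernel-verified Lean document; each statement's English description precedes it below -/
import Mathlib

section
/- For all integers n, m ≥ 1, the family of functions (P_k)_{k=0,…,n−1} is a basis of the ℤ/mℤ-module of all functions ℤ/nℤ → ℤ/mℤ: every function ℤ/nℤ → ℤ/mℤ is a ℤ/mℤ-linear combination of P_0, …, P_{n−1}, and if Σ_{k=0}^{n−1} a_k · P_k is the zero function with a_k ∈ ℤ/mℤ then all a_k = 0. -/
theorem stmt_1 (n m : ℕ) (hn : 1 ≤ n) (hm : 1 ≤ m) :
    (∀ f : ZMod n → ZMod m, ∃ a : Fin n → ZMod m,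
        ∀ x : ZMod n, f x = ∑ k : Fin n, a k * (Nat.choose x.val k : ZMod m)) ∧
    (∀ a : Fin n → ZMod m,
        (∀ x : ZMod n, ∑ k : Fin n, a k * (Nat.choose x.val k : ZMod m) = 0) →
        ∀ k, a k = 0) := by
  haveI : NeZero n := ⟨by omega⟩
  set M : Matrix (Fin n) (Fin n) (ZMod m) :=
    Matrix.of (fun x k => (Nat.choose x.val k.val : ZMod m)) with hMdef
  have hlt : M.BlockTriangular OrderDual.toDual := by
    intro i j hij
    have : i.val < j.val := hij
    simp [hMdef, Nat.choose_eq_zero_of_lt this]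
  have hdet : IsUnit M.det := by
    rw [Matrix.det_of_lowerTriangular M hlt]
    simp [hMdef]
  have hMinv : M⁻¹ * M = 1 := Matrix.nonsing_inv_mul M hdet
  have hMinv' : M * M⁻¹ = 1 := Matrix.mul_nonsing_inv M hdet
  -- key: for x : ZMod n, the sum equals (M *ᵥ a) at the corresponding Fin n index
  have key : ∀ (a : Fin n → ZMod m) (x : ZMod n),
      ∑ k : Fin n, a k * (Nat.choose x.val k : ZMod m)
        = (M.mulVec a) ⟨x.val, ZMod.val_lt x⟩ := by
    intro a x
    simp only [Matrix.mulVec, dotProduct, hMdef, Matrix.of_apply]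
    exact Finset.sum_congr rfl fun k _ => by ring
  constructor
  · intro f
    refine ⟨M⁻¹.mulVec (fun i => f (i.val : ZMod n)), fun x => ?_⟩
    rw [key, Matrix.mulVec_mulVec, hMinv', Matrix.one_mulVec]
    congr 1
    simp [ZMod.natCast_val, ZMod.cast_id]
  · intro a ha k
    have hz : M.mulVec a = 0 := by
      funext i
      have := ha (i.val : ZMod n)
      rw [key] at this
      have hv : (ZMod.val ((i.val : ZMod n))) = i.val := ZMod.val_natCast_of_lt i.isLt
      simpa [hv] using this
    have : M⁻¹.mulVec (M.mulVec a) = 0 := by rw [hz, Matrix.mulVec_zero]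
    rw [Matrix.mulVec_mulVec, hMinv, Matrix.one_mulVec] at this
    exact congrFun this k
end

section
/- Let n, k, p be natural numbers with k ≤ n and 0 ≤ n − k < p ≤ n. Then p divides lcm(k) · C(n, k) in ℕ. -/
/-- `ulcm k` is the least common multiple of `1, 2, …, k`, with `ulcm 0 = 1`. -/
def ulcm (k : ℕ) : ℕ := (Finset.Icc 1 k).lcm id

/-- `mu m` is the largest prime power dividing `m`. -/
def mu (m : ℕ) : ℕ := m.primeFactors.sup fun p => p ^ m.factorization p

/-- `f : ZMod n → ZMod m` is congruence preserving. -/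
def CongPres (n m : ℕ) (f : ZMod n → ZMod m) : Prop :=
  ∀ d : ℕ, ∀ hd : d ∣ m, ∀ a b : ℕ, a < n → b < n → a ≡ b [MOD d] →
    ZMod.castHom hd (ZMod d) (f a) = ZMod.castHom hd (ZMod d) (f b)

/-- `CP n m` is the number of congruence preserving functions `ZMod n → ZMod m`. -/
noncomputable def CP (n m : ℕ) : ℕ := Nat.card {f : ZMod n → ZMod m // CongPres n m f}

/-! Compare `q`-adic valuations for each prime `q`. The valuation of `ulcm k` is `log q k`.
For `log q k < i ≤ v_q(p)`, the multiple `p` of `q ^ i` lies in `(n - k, n]`, so adding `k` and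
`n - k` in base `q` carries at digit `i`; by Kummer's theorem `v_q(C(n, k)) ≥ v_q(p) - log q k`. -/

open Finset Nat

theorem Nat.le_mod_add_of_dvd_of_lt_of_le {Q m k c : ℕ} (hQc : Q ∣ c) (hmc : m < c)
    (hc : c ≤ m + k) : Q ≤ m % Q + k := by
  obtain ⟨d, rfl⟩ := hQc
  have hdiv : m / Q < d := Nat.div_lt_of_lt_mul hmc
  have hm := Nat.div_add_mod m Q
  nlinarith

theorem Nat.sub_log_le_factorization_choose {n k c q e : ℕ} (hq : q.Prime) (hkn : k ≤ n)
    (hc : n - k < c) (hcn : c ≤ n) (hqc : q ^ e ∣ c) :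
    e - log q k ≤ (choose n k).factorization q := by
  have hen : e ≤ n :=
    ((Nat.lt_pow_self hq.one_lt).trans_le ((Nat.le_of_dvd (by omega) hqc).trans hcn)).le
  rw [factorization_choose hq hkn (b := n + 1) (Nat.lt_succ_of_le (log_le_self q n))]
  calc e - log q k = #(Icc (log q k + 1) e) := by simp
    _ ≤ _ := card_le_card fun i hi => by
      obtain ⟨hLi, hie⟩ := mem_Icc.mp hi
      have hk : k < q ^ i := (lt_pow_succ_log_self hq.one_lt k).trans_le
        (Nat.pow_le_pow_right hq.pos hLi)
      rw [mem_filter, mem_Ico, Nat.mod_eq_of_lt hk, add_comm k]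
      exact ⟨⟨by omega, by omega⟩, le_mod_add_of_dvd_of_lt_of_le
        ((pow_dvd_pow q hie).trans hqc) hc (by omega)⟩

theorem stmt_2 (n k p : ℕ) (hkn : k ≤ n) (h1 : n - k < p) (h2 : p ≤ n) :
    p ∣ ulcm k * Nat.choose n k := by
  have hlcm : ulcm k ≠ 0 := lcmUpto_ne_zero k
  have hchoose : choose n k ≠ 0 := choose_ne_zero hkn
  rw [← factorization_prime_le_iff_dvd (by omega) (mul_ne_zero hlcm hchoose)]
  intro q hq
  rw [Nat.factorization_mul hlcm hchoose, Finsupp.add_apply, ulcm, ← lcmUpto,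
    factorization_lcmUpto k hq]
  have hval := sub_log_le_factorization_choose hq hkn h1 h2 (ordProj_dvd p q)
  omega
end

section
/- Let n, k, b be natural numbers with k ≤ b. Then n divides lcm(k) · (C(b + n, k) − C(b, k)) in ℤ. -/
/-! By Vandermonde, `C(b + n, k) - C(b, k) = ∑_{i < k} C(b, i) C(n, k - i)`. Each summand has
`1 ≤ j := k - i ≤ k`, so `j ∣ lcm(k)`, and `n ∣ j C(n, j)` because `j C(n, j) = n C(n - 1, j - 1)`. -/

open Finset

lemma dvd_ulcm {j k : ℕ} (hj : 0 < j) (hjk : j ≤ k) : j ∣ ulcm k :=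
  Finset.dvd_lcm (s := Icc 1 k) (f := id) (mem_Icc.mpr ⟨hj, hjk⟩)

lemma dvd_mul_choose (n : ℕ) {j : ℕ} (hj : 0 < j) : n ∣ j * n.choose j := by
  obtain ⟨i, rfl⟩ := Nat.exists_eq_add_of_lt hj
  cases n with
  | zero => simp
  | succ m => exact ⟨m.choose i, by rw [zero_add, mul_comm, Nat.add_one_mul_choose_eq]⟩

lemma dvd_ulcm_mul_choose (n : ℕ) {j k : ℕ} (hj : 0 < j) (hjk : j ≤ k) :
    n ∣ ulcm k * n.choose j := by
  obtain ⟨c, hc⟩ := dvd_ulcm hj hjk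
  rw [hc, mul_right_comm]
  exact (dvd_mul_choose n hj).mul_right c

lemma add_choose_eq_sum_add_choose (b n k : ℕ) :
    (b + n).choose k = ∑ i ∈ range k, b.choose i * n.choose (k - i) + b.choose k := by
  rw [Nat.add_choose_eq, Nat.sum_antidiagonal_eq_sum_range_succ (fun i j => b.choose i * n.choose j),
    sum_range_succ, Nat.sub_self, Nat.choose_zero_right, mul_one]

theorem stmt_3_general (n k b : ℕ) :
    (n : ℤ) ∣ (ulcm k : ℤ) * ((Nat.choose (b + n) k : ℤ) - (Nat.choose b k : ℤ)) := by
  have hsum : n ∣ ulcm k * ∑ i ∈ range k, b.choose i * n.choose (k - i) := by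
    rw [mul_sum]
    refine dvd_sum fun i hi => ?_
    have hik := mem_range.mp hi
    rw [mul_left_comm]
    exact (dvd_ulcm_mul_choose n (by omega) (Nat.sub_le k i)).mul_left _
  rw [add_choose_eq_sum_add_choose, Nat.cast_add, add_sub_cancel_right]
  exact_mod_cast hsum

theorem stmt_3 (n k b : ℕ) (hkb : k ≤ b) :
    (n : ℤ) ∣ (ulcm k : ℤ) * ((Nat.choose (b + n) k : ℤ) - (Nat.choose b k : ℤ)) :=
  stmt_3_general n k b
end

section
/- Let a, b, k be natural numbers with a ≥ b and k ≤ b. Then a − b divides lcm(k) · (C(a, k) − C(b, k)) in ℤ. -/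
/-! By Vandermonde, `C(n + b, k) - C(b, k) = ∑_{1 ≤ i ≤ k} C(n, i) C(b, k - i)`, and each
`C(n, i)` becomes a multiple of `n` after multiplication by `i`, hence by `lcm(k)`, because
`i C(n, i) = n C(n - 1, i - 1)`. The case `a < b` follows from `b ≤ a` by symmetry. -/

lemma dvd_ulcm_s4 {i k : ℕ} (hi : 1 ≤ i) (hik : i ≤ k) : i ∣ ulcm k :=
  Finset.dvd_lcm (Finset.mem_Icc.mpr ⟨hi, hik⟩)

lemma dvd_succ_mul_choose_succ (n i : ℕ) : n ∣ (i + 1) * n.choose (i + 1) := by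
  cases n with
  | zero => simp
  | succ m => exact ⟨m.choose i, by rw [Nat.add_one_mul_choose_eq, Nat.mul_comm]⟩

lemma dvd_ulcm_mul_choose_succ (n : ℕ) {i k : ℕ} (hik : i < k) :
    n ∣ ulcm k * n.choose (i + 1) :=
  (dvd_succ_mul_choose_succ n i).trans
    (Nat.mul_dvd_mul_right (dvd_ulcm_s4 (Nat.le_add_left 1 i) hik) _)

lemma add_choose_sub_choose (n b k : ℕ) :
    ((n + b).choose k : ℤ) - b.choose k =
      ∑ i ∈ Finset.range k, (n.choose (i + 1) * b.choose (k - (i + 1)) : ℤ) := by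
  rw [Nat.add_choose_eq, Finset.Nat.sum_antidiagonal_eq_sum_range_succ
    (fun i j => n.choose i * b.choose j), Finset.sum_range_succ']
  push_cast
  simp

lemma dvd_ulcm_mul_add_choose_sub_choose (n b k : ℕ) :
    (n : ℤ) ∣ ulcm k * (((n + b).choose k : ℤ) - b.choose k) := by
  rw [add_choose_sub_choose, Finset.mul_sum]
  refine Finset.dvd_sum fun i hi => ?_
  rw [← mul_assoc]
  exact_mod_cast Dvd.dvd.mul_right (dvd_ulcm_mul_choose_succ n (Finset.mem_range.mp hi)) _

theorem stmt_4_general (a b k : ℕ) :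
    ((a : ℤ) - (b : ℤ)) ∣ (ulcm k : ℤ) * ((Nat.choose a k : ℤ) - (Nat.choose b k : ℤ)) := by
  wlog hba : b ≤ a generalizing a b
  · have := this b a (by omega)
    rwa [← neg_sub, neg_dvd, ← neg_sub (b.choose k : ℤ), mul_neg, dvd_neg]
  obtain ⟨n, rfl⟩ := Nat.exists_eq_add_of_le' hba
  simpa using dvd_ulcm_mul_add_choose_sub_choose n b k

theorem stmt_4 (a b k : ℕ) (hba : b ≤ a) (hkb : k ≤ b) :
    ((a : ℤ) - (b : ℤ)) ∣ (ulcm k : ℤ) * ((Nat.choose a k : ℤ) - (Nat.choose b k : ℤ)) :=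
  stmt_4_general a b k
end

section
/- Let m ≥ 1, let a_1, …, a_k ≥ 1 be positive integers and let c be their least common multiple. If x ∈ ℤ/mℤ and for each i there exists t_i ∈ ℤ/mℤ with x = a_i · t_i, then there exists t ∈ ℤ/mℤ with x = c · t; that is, if a_1, …, a_k all divide x in ℤ/mℤ then so does their least common multiple c. -/
-- Binary distributivity direction: gcd (lcm a b) m ∣ lcm (gcd a m) (gcd b m)
lemma gcd_lcm_dvd (a b m : ℕ) (ha : a ≠ 0) (hb : b ≠ 0) (hm : m ≠ 0) :
    Nat.gcd (Nat.lcm a b) m ∣ Nat.lcm (Nat.gcd a m) (Nat.gcd b m) := by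
  have hlcm : Nat.lcm a b ≠ 0 := Nat.lcm_ne_zero ha hb
  have hga : Nat.gcd a m ≠ 0 := Nat.gcd_ne_zero_left ha
  have hgb : Nat.gcd b m ≠ 0 := Nat.gcd_ne_zero_left hb
  rw [← Nat.factorization_le_iff_dvd (Nat.gcd_ne_zero_left hlcm)
      (Nat.lcm_ne_zero hga hgb)]
  rw [Nat.factorization_gcd hlcm hm, Nat.factorization_lcm ha hb,
    Nat.factorization_lcm hga hgb, Nat.factorization_gcd ha hm,
    Nat.factorization_gcd hb hm]
  intro p
  simp only [Finsupp.inf_apply, Finsupp.sup_apply]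
  omega

lemma gcd_finset_lcm_dvd {ι : Type*} [DecidableEq ι] (s : Finset ι) (f : ι → ℕ) (m : ℕ)
    (hf : ∀ i ∈ s, f i ≠ 0) (hm : m ≠ 0) :
    Nat.gcd (s.lcm f) m ∣ s.lcm (fun i => Nat.gcd (f i) m) := by
  induction s using Finset.induction with
  | empty => simp
  | @insert i s hi ih =>
    rw [Finset.lcm_insert, Finset.lcm_insert]
    have h1 : s.lcm f ≠ 0 := by
      simp [Nat.lcm_ne_zero, Finset.lcm_eq_zero_iff]
      intro j hj
      exact hf j (Finset.mem_insert_of_mem hj)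
    have h2 := gcd_lcm_dvd (f i) (s.lcm f) m (hf i (Finset.mem_insert_self i s)) h1 hm
    refine h2.trans (Nat.lcm_dvd ?_ ?_)
    · exact Nat.dvd_lcm_left _ _
    · exact (ih (fun j hj => hf j (Finset.mem_insert_of_mem hj))).trans (Nat.dvd_lcm_right _ _)

-- Bezout in ZMod m : (n : ZMod m) divides (gcd n m : ZMod m)
lemma cast_dvd_cast_gcd (m n : ℕ) : (n : ZMod m) ∣ ((Nat.gcd n m : ℕ) : ZMod m) := by
  have h := Nat.gcd_eq_gcd_ab n m
  refine ⟨((Nat.gcdA n m : ℤ) : ZMod m), ?_⟩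
  have : ((Nat.gcd n m : ℤ) : ZMod m) = ((n * Nat.gcdA n m + m * Nat.gcdB n m : ℤ) : ZMod m) := by
    rw [← h]
  push_cast at this ⊢
  rw [this]
  simp [ZMod.natCast_self]

lemma dvd_iff_val (m d : ℕ) (hm : m ≠ 0) (hd : d ∣ m) (x : ZMod m) :
    (d : ZMod m) ∣ x ↔ d ∣ x.val := by
  haveI : NeZero m := ⟨hm⟩
  have hxv : ((x.val : ℕ) : ZMod m) = x := by simp [ZMod.natCast_val, ZMod.cast_id]
  constructor
  · rintro ⟨t, ht⟩
    have heq : (x.val : ZMod m) = ((d * t.val : ℕ) : ZMod m) := by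
      rw [hxv, ht]; push_cast; simp [ZMod.natCast_val, ZMod.cast_id]
    have hmod : x.val ≡ d * t.val [MOD m] := (ZMod.natCast_eq_natCast_iff _ _ _).mp heq
    have hz : (m : ℤ) ∣ (d * t.val : ℤ) - (x.val : ℤ) := by
      exact_mod_cast (Nat.modEq_iff_dvd).mp hmod
    have hdz : (d : ℤ) ∣ (x.val : ℤ) := by
      have h1 : (d : ℤ) ∣ (d * t.val : ℤ) - (x.val : ℤ) :=
        dvd_trans (Int.natCast_dvd_natCast.mpr hd) hz
      have h2 : (d : ℤ) ∣ (d * t.val : ℤ) := Dvd.intro _ rfl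
      have := dvd_sub h2 h1
      simpa using this
    exact_mod_cast hdz
  · rintro ⟨s, hs⟩
    refine ⟨(s : ZMod m), ?_⟩
    rw [← hxv, hs]
    push_cast
    ring

theorem stmt_5 (m : ℕ) (hm : 1 ≤ m) (k : ℕ) (a : Fin k → ℕ) (ha : ∀ i, 1 ≤ a i)
    (c : ℕ) (hc : c = Finset.univ.lcm a) (x : ZMod m)
    (h : ∀ i, (a i : ZMod m) ∣ x) :
    (c : ZMod m) ∣ x := by
  have hm0 : m ≠ 0 := by omega
  set g : Fin k → ℕ := fun i => Nat.gcd (a i) m with hg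
  have hgdvdm : ∀ i, g i ∣ m := fun i => Nat.gcd_dvd_right _ _
  have hgx : ∀ i, g i ∣ x.val := by
    intro i
    rw [← dvd_iff_val m (g i) hm0 (hgdvdm i)]
    exact dvd_trans (Nat.cast_dvd_cast (Nat.gcd_dvd_left _ _)) (h i)
  have hL : Finset.univ.lcm g ∣ x.val := Finset.lcm_dvd (fun i _ => hgx i)
  have hLm : Finset.univ.lcm g ∣ m := Finset.lcm_dvd (fun i _ => hgdvdm i)
  have hLx : ((Finset.univ.lcm g : ℕ) : ZMod m) ∣ x := (dvd_iff_val m _ hm0 hLm x).mpr hL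
  have hgcd : Nat.gcd c m ∣ Finset.univ.lcm g := by
    rw [hc]
    exact gcd_finset_lcm_dvd Finset.univ a m (fun i _ => by have := ha i; omega) hm0
  exact dvd_trans (cast_dvd_cast_gcd m c) (dvd_trans (Nat.cast_dvd_cast hgcd) hLx)
end

section
/- Let n, m ≥ 1 and let f : ℤ/nℤ → ℤ/mℤ have the (unique) expansion f(x) = Σ_{k=0}^{n−1} a_k · C(x, k) in ℤ/mℤ (x taken as its representative in {0, …, n−1}, a_k ∈ ℤ/mℤ). Then f is congruence preserving if and only if for every k = 0, …, n−1 the element lcm(k), viewed in ℤ/mℤ, divides a_k in ℤ/mℤ. -/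
/-!
The coefficients of the binomial expansion are the forward differences `a k = Δᵏ f (0)`.
If `f` is congruence preserving and `d ∣ m`, then modulo `d` each difference `f (y + t) - f y`
is a multiple of `t`, and `d ∣ t * C(d, t)` makes `Δᵈ f` vanish modulo `d`. Hence `a k ≡ 0`
modulo every divisor `d ≤ k` of `m`; the prime powers among these already give divisibility by
`gcd (lcm k) m`, which generates the same ideal of `ℤ/mℤ` as `lcm k`. Conversely, by
Vandermonde's identity `j - i` divides `lcm k * (C(j, k) - C(i, k))`, because
`c ∣ lcm k * C(c, s)` for `1 ≤ s ≤ k`, so each term `a k * C(x, k)` is congruence preserving.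
-/

open Finset Function fwdDiff

namespace Nat

theorem dvd_mul_choose (c : ℕ) {t : ℕ} (ht : t ≠ 0) : c ∣ t * c.choose t := by
  obtain ⟨t, rfl⟩ := exists_eq_add_one_of_ne_zero ht
  cases c with
  | zero => simp
  | succ c => exact ⟨c.choose t, by rw [add_one_mul_choose_eq, mul_comm]⟩

theorem pow_le_of_pow_dvd_lcmUpto {p i k : ℕ} (hp : p.Prime) (hi : i ≠ 0)
    (h : p ^ i ∣ lcmUpto k) : p ^ i ≤ k := by
  rw [hp.pow_dvd_iff_le_factorization (lcmUpto_ne_zero k), factorization_lcmUpto k hp] at h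
  have hk : k ≠ 0 := by rintro rfl; rw [log_zero_right] at h; omega
  exact (pow_le_pow_right₀ hp.one_lt.le h).trans (pow_log_le_self p hk)

theorem dvd_lcmUpto_mul_choose {c t k : ℕ} (ht : t ≠ 0) (htk : t ≤ k) :
    c ∣ lcmUpto k * c.choose t :=
  (dvd_mul_choose c ht).trans <|
    mul_dvd_mul_right (dvd_lcm (f := id) (mem_Icc.2 ⟨one_le_iff_ne_zero.2 ht, htk⟩)) _

theorem natCast_dvd_lcmUpto_mul_choose_add_sub (k i c : ℕ) :
    (c : ℤ) ∣ lcmUpto k * (((i + c).choose k : ℤ) - i.choose k) := by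
  rw [add_choose_eq, ← add_sum_erase _ _ (show (k, 0) ∈ antidiagonal k by simp)]
  push_cast
  simp only [choose_zero_right, cast_one, mul_one, add_sub_cancel_left, mul_sum]
  refine dvd_sum fun ij hij => ?_
  obtain ⟨hne, hsum⟩ := mem_erase.1 hij
  have hij2 : ij.2 ≠ 0 := fun h =>
    hne (Prod.ext (by rw [← mem_antidiagonal.1 hsum, h, add_zero]) h)
  refine (Int.natCast_dvd_natCast.2 (dvd_lcmUpto_mul_choose hij2 ?_)).trans
    ⟨i.choose ij.1, by push_cast; ring⟩
  rw [← mem_antidiagonal.1 hsum]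
  exact le_add_self

theorem sub_dvd_lcmUpto_mul_choose_sub (k i j : ℕ) :
    ((j : ℤ) - i) ∣ lcmUpto k * ((j.choose k : ℤ) - i.choose k) := by
  wlog hij : i ≤ j generalizing i j
  · rw [← neg_dvd, neg_sub, ← dvd_neg, ← mul_neg, neg_sub]
    exact this j i (le_of_not_ge hij)
  obtain ⟨c, rfl⟩ := exists_add_of_le hij
  simpa using natCast_dvd_lcmUpto_mul_choose_add_sub k i c

theorem ModEq.lcmUpto_mul_choose {d i j : ℕ} (k : ℕ) (h : i ≡ j [MOD d]) :
    lcmUpto k * i.choose k ≡ lcmUpto k * j.choose k [MOD d] :=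
  modEq_iff_dvd.2 <| by
    push_cast
    rw [← mul_sub]
    exact (modEq_iff_dvd.1 h).trans (sub_dvd_lcmUpto_mul_choose_sub k i j)

end Nat

namespace ZMod

theorem natCast_dvd_natCast_gcd (t N : ℕ) : (t : ZMod N) ∣ (Nat.gcd t N : ZMod N) :=
  ⟨Nat.gcdA t N, by rw [← Int.cast_natCast, Nat.gcd_eq_gcd_ab]; simp⟩

theorem castHom_eq_zero_iff {m d : ℕ} [NeZero m] (hd : d ∣ m) (x : ZMod m) :
    castHom hd (ZMod d) x = 0 ↔ d ∣ x.val := by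
  rw [← natCast_eq_zero_iff, ← map_natCast (castHom hd (ZMod d)), natCast_zmod_val]

theorem natCast_dvd_of_castHom_eq_zero {m d : ℕ} [NeZero m] (hd : d ∣ m) {x : ZMod m}
    (hx : castHom hd (ZMod d) x = 0) : (d : ZMod m) ∣ x := by
  rw [← natCast_zmod_val x]
  exact Nat.cast_dvd_cast ((castHom_eq_zero_iff hd x).1 hx)

theorem natCast_lcmUpto_dvd {m k : ℕ} [NeZero m] {x : ZMod m}
    (hx : ∀ d (hd : d ∣ m), d ≤ k → castHom hd (ZMod d) x = 0) :
    (Nat.lcmUpto k : ZMod m) ∣ x := by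
  refine (natCast_dvd_natCast_gcd _ m).trans ?_
  rw [← natCast_zmod_val x]
  refine Nat.cast_dvd_cast ((Nat.dvd_iff_prime_pow_dvd_dvd _ _).2 fun p i hp hpi => ?_)
  rcases eq_or_ne i 0 with rfl | hi
  · simp
  have hm := hpi.trans (Nat.gcd_dvd_right _ _)
  exact (castHom_eq_zero_iff hm x).1 <| hx _ hm <|
    Nat.pow_le_of_pow_dvd_lcmUpto hp hi (hpi.trans (Nat.gcd_dvd_left _ _))

end ZMod

section fwdDiff

theorem map_fwdDiff_iter {M G G' F : Type*} [AddCommMonoid M] [AddCommGroup G] [AddCommGroup G']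
    [FunLike F G G'] [AddMonoidHomClass F G G'] (φ : F) (h : M) (g : M → G) (k : ℕ) (y : M) :
    φ (Δ_[h] ^[k] g y) = Δ_[h] ^[k] (fun x => φ (g x)) y := by
  simp [fwdDiff_iter_eq_sum_shift, map_sum, map_zsmul]

theorem fwdDiff_iter_apply_zero_congr {G : Type*} [AddCommGroup G] {f g : ℕ → G} {k : ℕ}
    (h : ∀ i ≤ k, f i = g i) : Δ_[1] ^[k] f 0 = Δ_[1] ^[k] g 0 := by
  simp only [fwdDiff_iter_eq_sum_shift, zero_add, smul_eq_mul, mul_one]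
  exact sum_congr rfl fun i hi => by rw [h i (Nat.lt_succ_iff.1 (mem_range.1 hi))]

theorem fwdDiff_iter_mul_choose_apply_zero {R : Type*} [Ring R] (r : R) (j k : ℕ) :
    Δ_[1] ^[k] (fun x : ℕ => r * (x.choose j : R)) 0 = if k = j then r else 0 := by
  have hcast := map_fwdDiff_iter (Int.castRingHom R) 1 (fun x : ℕ => (x.choose j : ℤ)) k 0
  rw [fwdDiff_iter_choose_zero] at hcast
  have hfun : (fun x : ℕ => r * (x.choose j : R)) =
      r • fun x => Int.castRingHom R (x.choose j) := by
    ext; simp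
  rw [hfun, fwdDiff_iter_const_smul, Pi.smul_apply, ← hcast]
  split_ifs <;> simp

variable {R : Type*} [CommRing R] {N : ℕ}

theorem fwdDiff_iter_self_eq_zero (hN : N ≠ 0) (hNR : (N : R) = 0) (G : ℕ → R) (y : ℕ)
    (hG : ∀ t ≤ N, (t : R) ∣ G (y + t) - G y) : Δ_[1] ^[N] G y = 0 := by
  have hterm : ∀ t ≤ N, (N.choose t : R) * (G (y + t) - G y) = 0 := by
    intro t ht
    rcases eq_or_ne t 0 with rfl | ht0
    · simp
    obtain ⟨w, hw⟩ := hG t ht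
    obtain ⟨c, hc⟩ := Nat.dvd_mul_choose N ht0
    rw [hw, ← mul_assoc, mul_comm (N.choose t : R), ← Nat.cast_mul, hc, Nat.cast_mul, hNR,
      zero_mul, zero_mul]
  have hconst : Δ_[1] ^[N] (fun _ : ℕ => G y) y = 0 := by
    obtain ⟨N, rfl⟩ := Nat.exists_eq_succ_of_ne_zero hN
    rw [iterate_succ_apply, fwdDiff_const, iterate_fixed (fwdDiff_const 1 (0 : R))]
  calc Δ_[1] ^[N] G y = Δ_[1] ^[N] G y - Δ_[1] ^[N] (fun _ : ℕ => G y) y := by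
        rw [hconst, sub_zero]
    _ = ∑ t ∈ range (N + 1), ((-1 : ℤ) ^ (N - t) * N.choose t) • (G (y + t) - G y) := by
      simp only [fwdDiff_iter_eq_sum_shift, smul_sub, sum_sub_distrib, smul_eq_mul, mul_one]
    _ = 0 := sum_eq_zero fun t ht => by
      rw [zsmul_eq_mul, Int.cast_mul, Int.cast_natCast, mul_assoc,
        hterm t (Nat.lt_succ_iff.1 (mem_range.1 ht)), mul_zero]

theorem fwdDiff_iter_apply_zero_eq_zero_of_le {k : ℕ} (hN : N ≠ 0) (hNR : (N : R) = 0)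
    (hNk : N ≤ k) (G : ℕ → R)
    (hG : ∀ i j, i ≤ j → j ≤ k → ((j - i : ℕ) : R) ∣ G j - G i) :
    Δ_[1] ^[k] G 0 = 0 := by
  obtain ⟨l, rfl⟩ := exists_add_of_le hNk
  rw [add_comm, iterate_add_apply, fwdDiff_iter_eq_sum_shift]
  refine sum_eq_zero fun s hs => ?_
  rw [fwdDiff_iter_self_eq_zero hN hNR G _ fun t ht => ?_, smul_zero]
  have hs := Nat.lt_succ_iff.1 (mem_range.1 hs)
  simpa using hG s (s + t) le_self_add (by omega)

end fwdDiff

namespace CongPres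

variable {n m : ℕ} {f : ZMod n → ZMod m}

theorem natCast_sub_dvd (hf : CongPres n m f) {N : ℕ} [NeZero N] (hN : N ∣ m) {i j : ℕ}
    (hij : i ≤ j) (hj : j < n) :
    ((j - i : ℕ) : ZMod N) ∣
      ZMod.castHom hN (ZMod N) (f j) - ZMod.castHom hN (ZMod N) (f i) := by
  have hdN : Nat.gcd (j - i) N ∣ N := Nat.gcd_dvd_right _ _
  refine (ZMod.natCast_dvd_natCast_gcd _ N).trans (ZMod.natCast_dvd_of_castHom_eq_zero hdN ?_)
  have hji : j ≡ i [MOD Nat.gcd (j - i) N] :=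
    ((Nat.modEq_iff_dvd' hij).2 (Nat.gcd_dvd_left _ _)).symm
  rw [map_sub, ← RingHom.comp_apply, ← RingHom.comp_apply, ZMod.castHom_comp,
    hf _ (hdN.trans hN) j i hj (by omega) hji, sub_self]

end CongPres

theorem fwdDiff_iter_apply_zero_eq_coeff {n m : ℕ} {f : ZMod n → ZMod m} {a : Fin n → ZMod m}
    (hf : ∀ x : ZMod n, f x = ∑ k : Fin n, a k * (Nat.choose x.val k : ZMod m)) (k : Fin n) :
    Δ_[1] ^[k] (fun i : ℕ => f i) 0 = a k := by
  rw [fwdDiff_iter_apply_zero_congr (g := fun x : ℕ => ∑ j : Fin n, a j * (x.choose j : ZMod m))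
    fun i hi => by rw [hf, ZMod.val_natCast_of_lt (by omega)]]
  rw [← sum_fn, fwdDiff_iter_finsetSum, Finset.sum_apply]
  simp [fwdDiff_iter_mul_choose_apply_zero, Fin.val_inj]

theorem congPres_of_natCast_lcmUpto_dvd {n m : ℕ} {f : ZMod n → ZMod m} {a : Fin n → ZMod m}
    (hf : ∀ x : ZMod n, f x = ∑ k : Fin n, a k * (Nat.choose x.val k : ZMod m))
    (ha : ∀ k : Fin n, (Nat.lcmUpto k : ZMod m) ∣ a k) : CongPres n m f := by
  intro d hd i j hi hj hij
  simp only [hf, ZMod.val_natCast_of_lt hi, ZMod.val_natCast_of_lt hj, map_sum, map_mul,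
    map_natCast]
  refine sum_congr rfl fun k _ => ?_
  obtain ⟨t, ht⟩ := ha k
  rw [ht, map_mul, map_natCast]
  calc _ = ZMod.castHom hd (ZMod d) t * ((Nat.lcmUpto k * i.choose k : ℕ) : ZMod d) := by
        push_cast; ring
    _ = ZMod.castHom hd (ZMod d) t * ((Nat.lcmUpto k * j.choose k : ℕ) : ZMod d) := by
        rw [(ZMod.natCast_eq_natCast_iff _ _ _).2 (Nat.ModEq.lcmUpto_mul_choose k hij)]
    _ = _ := by push_cast; ring

theorem ulcm_eq_lcmUpto : ulcm = Nat.lcmUpto := rfl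

theorem stmt_6_general (n m : ℕ) (hm : 1 ≤ m) (f : ZMod n → ZMod m)
    (a : Fin n → ZMod m)
    (hf : ∀ x : ZMod n, f x = ∑ k : Fin n, a k * (Nat.choose x.val k : ZMod m)) :
    CongPres n m f ↔ ∀ k : Fin n, (ulcm k : ZMod m) ∣ a k := by
  rw [ulcm_eq_lcmUpto]
  refine ⟨fun hcp k => ?_, congPres_of_natCast_lcmUpto_dvd hf⟩
  have : NeZero m := ⟨by omega⟩
  refine ZMod.natCast_lcmUpto_dvd fun d hd hdk => ?_
  have hd0 : d ≠ 0 := (Nat.pos_of_dvd_of_pos hd hm).ne'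
  have : NeZero d := ⟨hd0⟩
  rw [← fwdDiff_iter_apply_zero_eq_coeff hf k, map_fwdDiff_iter]
  exact fwdDiff_iter_apply_zero_eq_zero_of_le hd0 (ZMod.natCast_self d) hdk _
    fun i j hij hjk => hcp.natCast_sub_dvd hd hij (hjk.trans_lt k.isLt)

theorem stmt_6 (n m : ℕ) (hn : 1 ≤ n) (hm : 1 ≤ m) (f : ZMod n → ZMod m)
    (a : Fin n → ZMod m)
    (hf : ∀ x : ZMod n, f x = ∑ k : Fin n, a k * (Nat.choose x.val k : ZMod m)) :
    CongPres n m f ↔ ∀ k : Fin n, (ulcm k : ZMod m) ∣ a k :=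
  stmt_6_general n m hm f a hf
end

section
/- Let n, m ≥ 1, let f : ℤ/nℤ → ℤ/mℤ be congruence preserving, and let a_0, …, a_{n−1} ∈ ℤ/mℤ be its coefficients in the expansion f(x) = Σ_{k=0}^{n−1} a_k · C(x, k). Then for every k with 1 ≤ k ≤ n−1, the element k (viewed in ℤ/mℤ) divides a_k in ℤ/mℤ. -/
open Function fwdDiff

section fwdDiff

variable {M G : Type*} [AddCommMonoid M] [AddCommGroup G]

lemma fwdDiff_iter_smul_const (h : M) (f : M → ℤ) (g : G) (k : ℕ) :
    Δ_[h] ^[k] (fun y ↦ f y • g) = fun y ↦ Δ_[h] ^[k] f y • g := by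
  induction k generalizing f with
  | zero => rfl
  | succ k ih => rw [iterate_succ_apply, iterate_succ_apply, fwdDiff_smul_const]; exact ih _

lemma fwdDiff_iter_sum_mul_choose_zero {R : Type*} [Ring R] {n : ℕ} (a : Fin n → R)
    (k : Fin n) : Δ_[1] ^[k] (fun x : ℕ ↦ ∑ l : Fin n, a l * (x.choose l : R)) 0 = a k := by
  have hsmul : (fun x : ℕ ↦ ∑ l : Fin n, a l * (x.choose l : R)) =
      ∑ l : Fin n, fun x : ℕ ↦ (x.choose l : ℤ) • a l := by
    ext x
    simp only [Finset.sum_apply, zsmul_eq_mul, Int.cast_natCast, Nat.cast_comm]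
  simp only [hsmul, fwdDiff_iter_finsetSum, Finset.sum_apply, fwdDiff_iter_smul_const,
    fwdDiff_iter_choose_zero, ite_smul, one_smul, zero_smul, Fin.val_inj, Finset.sum_ite_eq,
    Finset.mem_univ, if_true]

lemma fwdDiff_iter_sub_const (h : M) (f : M → G) (c : G) {k : ℕ} (hk : k ≠ 0) :
    Δ_[h] ^[k] (fun y ↦ f y - c) = Δ_[h] ^[k] f := by
  obtain ⟨k, rfl⟩ := Nat.exists_eq_succ_of_ne_zero hk
  simp only [iterate_succ_apply]
  congr 1
  ext y
  simp only [fwdDiff, sub_sub_sub_cancel_right]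

end fwdDiff

lemma natCast_dvd_fwdDiff_iter_zero {R : Type*} [CommRing R] (G : ℕ → R) {k : ℕ}
    (hk : k ≠ 0) (hG : ∀ j ≤ k, (j : R) ∣ G j - G 0) : (k : R) ∣ Δ_[1] ^[k] G 0 := by
  rw [← fwdDiff_iter_sub_const 1 G (G 0) hk, fwdDiff_iter_eq_sum_shift]
  refine Finset.dvd_sum fun j hj ↦ ?_
  obtain ⟨t, ht⟩ := hG j (Finset.mem_range_succ_iff.mp hj)
  simp only [zero_add, smul_eq_mul, mul_one, ht]
  rcases Nat.eq_zero_or_pos j with rfl | hj0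
  · simp
  obtain ⟨k, rfl⟩ := Nat.exists_eq_add_one_of_ne_zero hk
  obtain ⟨j, rfl⟩ := Nat.exists_eq_add_one_of_ne_zero hj0.ne'
  have hchoose := congrArg (Nat.cast : ℕ → R) (Nat.add_one_mul_choose_eq k j)
  refine ⟨(-1) ^ (k - j) * k.choose j * t, ?_⟩
  rw [zsmul_eq_mul, Nat.add_sub_add_right]
  push_cast at hchoose ⊢
  linear_combination -(-1 : R) ^ (k - j) * t * hchoose

lemma ZMod.natCast_dvd_of_castHom_eq_zero_s7 {m d : ℕ} (hd : d ∣ m) {x : ZMod m}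
    (hx : ZMod.castHom hd (ZMod d) x = 0) : (d : ZMod m) ∣ x := by
  obtain ⟨z, rfl⟩ := ZMod.intCast_surjective x
  rw [map_intCast, ZMod.intCast_zmod_eq_zero_iff_dvd] at hx
  obtain ⟨c, rfl⟩ := hx
  exact ⟨c, by push_cast; rfl⟩

lemma ZMod.natCast_dvd_natCast_gcd_s7 (a m : ℕ) : (a : ZMod m) ∣ (a.gcd m : ZMod m) := by
  refine ⟨(a.gcdA m : ZMod m), ?_⟩
  have hbezout := congrArg (Int.cast : ℤ → ZMod m) (Nat.gcd_eq_gcd_ab a m)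
  push_cast at hbezout
  rw [hbezout, ZMod.natCast_self, zero_mul, add_zero]

lemma CongPres.natCast_dvd_sub_zero {n m : ℕ} {f : ZMod n → ZMod m} (hf : CongPres n m f)
    {j : ℕ} (hj : j < n) : (j : ZMod m) ∣ f j - f 0 := by
  have hd := Nat.gcd_dvd_right j m
  refine (ZMod.natCast_dvd_natCast_gcd_s7 j m).trans (ZMod.natCast_dvd_of_castHom_eq_zero_s7 hd ?_)
  rw [map_sub, sub_eq_zero]
  simpa using hf _ hd j 0 hj (by omega) (Nat.modEq_zero_iff_dvd.mpr (Nat.gcd_dvd_left j m))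

theorem stmt_7_general (n m : ℕ) (f : ZMod n → ZMod m)
    (hcp : CongPres n m f) (a : Fin n → ZMod m)
    (hf : ∀ x : ZMod n, f x = ∑ k : Fin n, a k * (Nat.choose x.val k : ZMod m)) :
    ∀ k : Fin n, 1 ≤ (k : ℕ) → ((k : ℕ) : ZMod m) ∣ a k := by
  intro k hk
  set P : ℕ → ZMod m := fun x ↦ ∑ l : Fin n, a l * (x.choose l : ZMod m)
  have hfP : ∀ j < n, f j = P j := fun j hj ↦ by rw [hf, ZMod.val_natCast_of_lt hj]
  rw [← fwdDiff_iter_sum_mul_choose_zero a k]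
  refine natCast_dvd_fwdDiff_iter_zero P (by omega) fun j hj ↦ ?_
  have hjn : j < n := hj.trans_lt k.isLt
  rw [← hfP j hjn, ← hfP 0 (by omega), Nat.cast_zero]
  exact hcp.natCast_dvd_sub_zero hjn

theorem stmt_7 (n m : ℕ) (hn : 1 ≤ n) (hm : 1 ≤ m) (f : ZMod n → ZMod m)
    (hcp : CongPres n m f) (a : Fin n → ZMod m)
    (hf : ∀ x : ZMod n, f x = ∑ k : Fin n, a k * (Nat.choose x.val k : ZMod m)) :
    ∀ k : Fin n, 1 ≤ (k : ℕ) → ((k : ℕ) : ZMod m) ∣ a k :=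
  stmt_7_general n m f hcp a hf
end

section
/- Let n ≥ 1 and m ≥ 2. Every congruence preserving function f : ℤ/nℤ → ℤ/mℤ is rat-polynomial of degree less than μ(m): there exist p < μ(m) and elements a_0, …, a_p ∈ ℤ/mℤ such that f(x) = Σ_{k=0}^{p} a_k · C(x, k) in ℤ/mℤ for every x ∈ {0, …, n−1}. -/
/-!
Work modulo one prime power `p ^ e` exactly dividing `m` at a time and glue by the Chinese
remainder theorem. Newton's forward-difference formula `g x = ∑ k, Δᵏ g 0 * C(x, k)` reduces the
claim to `Δᵏ g = 0` for `k ≥ p ^ e`, which matters only when `p ^ e ≤ n`; then `g` extends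
`p ^ e`-periodically with `p ^ i ∣ g (x + p ^ i) - g x` for all `i ≤ e`. Writing `Δ = S - 1` with
`S` the shift, `(S - 1) ^ p ^ e` lies in the ideal of `ℤ[S]` generated by the
`p ^ (e - i) * (S ^ p ^ i - 1)`: raise to the `p`-th power inductively, using
`(a + b) ^ p ≡ a ^ p + b ^ p` modulo `p * a * b`. Hence `p ^ e ∣ Δ ^ p ^ e g`, i.e. it vanishes.
-/

open Polynomial fwdDiff fwdDiff_aux

-- `diffIdeal p (v + 1)` is the ideal generated by the `p ^ (v - i) * (X ^ p ^ i - 1)` for `i ≤ v`.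
noncomputable def diffIdeal (p : ℕ) : ℕ → Ideal ℤ[X]
  | 0 => ⊥
  | v + 1 => Ideal.span {(p : ℤ[X])} * diffIdeal p v ⊔ Ideal.span {X ^ p ^ v - 1}

section diffIdeal

variable {p v : ℕ}

lemma mem_diffIdeal_succ {T : ℤ[X]} :
    T ∈ diffIdeal p (v + 1) ↔
      ∃ b ∈ diffIdeal p v, ∃ c, T = (p : ℤ[X]) * b + c * (X ^ p ^ v - 1) := by
  simp only [diffIdeal, Submodule.mem_sup, Ideal.mem_span_singleton_mul, Ideal.mem_span_singleton']
  constructor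
  · rintro ⟨_, ⟨b, hb, rfl⟩, _, ⟨c, rfl⟩, rfl⟩
    exact ⟨b, hb, c, rfl⟩
  · rintro ⟨b, hb, c, rfl⟩
    exact ⟨_, ⟨b, hb, rfl⟩, _, ⟨c, rfl⟩, rfl⟩

lemma natCast_mul_mem_diffIdeal_succ {b : ℤ[X]} (hb : b ∈ diffIdeal p v) :
    (p : ℤ[X]) * b ∈ diffIdeal p (v + 1) :=
  mem_diffIdeal_succ.2 ⟨b, hb, 0, by ring⟩

lemma X_pow_sub_one_mem_diffIdeal_succ : (X ^ p ^ v - 1 : ℤ[X]) ∈ diffIdeal p (v + 1) :=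
  mem_diffIdeal_succ.2 ⟨0, zero_mem _, 1, by ring⟩

lemma pow_mem_diffIdeal_succ (hp : p.Prime) {a : ℤ[X]} (ha : a ∈ diffIdeal p v) :
    a ^ p ∈ diffIdeal p (v + 1) := by
  cases v with
  | zero =>
    rw [diffIdeal, Ideal.mem_bot] at ha
    rw [ha, zero_pow hp.ne_zero]
    exact zero_mem _
  | succ v =>
    obtain ⟨b, hb, c, rfl⟩ := mem_diffIdeal_succ.1 ha
    set Y : ℤ[X] := X ^ p ^ v - 1
    have hpY : (p : ℤ[X]) * Y ∈ diffIdeal p (v + 2) :=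
      natCast_mul_mem_diffIdeal_succ X_pow_sub_one_mem_diffIdeal_succ
    have hppb : (p : ℤ[X]) * (p * b) ∈ diffIdeal p (v + 2) :=
      natCast_mul_mem_diffIdeal_succ (natCast_mul_mem_diffIdeal_succ hb)
    -- `X ^ p ^ (v + 1) = (Y + 1) ^ p ≡ Y ^ p + 1` modulo `p * Y`
    have hYp : Y ^ p ∈ diffIdeal p (v + 2) := by
      obtain ⟨s, hs⟩ := exists_add_pow_prime_eq hp Y 1
      have hY : Y ^ p = (X ^ p ^ (v + 1) - 1 : ℤ[X]) - p * Y * s := by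
        rw [pow_succ, pow_mul, ← sub_add_cancel (X ^ p ^ v : ℤ[X]) 1, hs]
        ring
      rw [hY]
      exact sub_mem X_pow_sub_one_mem_diffIdeal_succ (Ideal.mul_mem_right _ _ hpY)
    obtain ⟨r, hr⟩ := exists_add_pow_prime_eq hp (p * b) (c * Y)
    obtain ⟨k, hk⟩ := Nat.exists_eq_add_of_le' hp.two_le
    have hpb : ((p : ℤ[X]) * b) ^ p = p * (p * b) * ((p * b) ^ k * b) := by
      rw [hk, pow_add, pow_two]
      ring
    rw [hr, hpb, mul_pow c Y]
    refine add_mem (add_mem (Ideal.mul_mem_right _ _ hppb) (Ideal.mul_mem_left _ _ hYp)) ?_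
    rw [show (p : ℤ[X]) * (p * b) * (c * Y) * r = p * Y * (p * b * c * r) by ring]
    exact Ideal.mul_mem_right _ _ hpY

lemma X_sub_one_pow_mem_diffIdeal (hp : p.Prime) (v : ℕ) :
    (X - 1 : ℤ[X]) ^ p ^ v ∈ diffIdeal p (v + 1) := by
  induction v with
  | zero => simpa using (X_pow_sub_one_mem_diffIdeal_succ : (X ^ p ^ 0 - 1 : ℤ[X]) ∈ _)
  | succ v ih =>
    rw [pow_succ, pow_mul]
    exact pow_mem_diffIdeal_succ hp ih

end diffIdeal

section shift

variable {R : Type*} [CommRing R]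

lemma aeval_shiftₗ_X_pow_sub_one (j : ℕ) (H : ℕ → R) (x : ℕ) :
    aeval (shiftₗ ℕ R 1) (X ^ j - 1 : ℤ[X]) H x = H (x + j) - H x := by
  simp [shiftₗ_pow_apply]

lemma aeval_shiftₗ_X_sub_one_pow (k : ℕ) (H : ℕ → R) :
    aeval (shiftₗ ℕ R 1) ((X - 1 : ℤ[X]) ^ k) H = (Δ_[1])^[k] H := by
  rw [map_pow, map_sub, aeval_X, map_one, shiftₗ, add_sub_cancel_right, coe_fwdDiffₗ_pow]

lemma aeval_shiftₗ_mem {J : Ideal R} {H : ℕ → R} (hH : ∀ x, H x ∈ J) (T : ℤ[X]) (x : ℕ) :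
    aeval (shiftₗ ℕ R 1) T H x ∈ J := by
  induction T using Polynomial.induction_on' with
  | add T U hT hU => simpa using add_mem hT hU
  | monomial j a =>
    rw [← C_mul_X_pow_eq_monomial, map_mul, aeval_C, map_pow, aeval_X, Module.End.mul_apply,
      algebraMap_int_eq, eq_intCast, Module.End.intCast_apply, Pi.smul_apply, shiftₗ_pow_apply]
    exact zsmul_mem (hH _) a

lemma natCast_pow_dvd_aeval_shiftₗ {p : ℕ} {H : ℕ → R} (v : ℕ)
    (hH : ∀ i ≤ v, ∀ x, (p : R) ^ i ∣ H (x + p ^ i) - H x) {T : ℤ[X]}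
    (hT : T ∈ diffIdeal p (v + 1)) (x : ℕ) : (p : R) ^ v ∣ aeval (shiftₗ ℕ R 1) T H x := by
  induction v generalizing T x with
  | zero => exact pow_zero (p : R) ▸ one_dvd _
  | succ v ih =>
    obtain ⟨b, hb, c, rfl⟩ := mem_diffIdeal_succ.1 hT
    have hY : ∀ y, aeval (shiftₗ ℕ R 1) (X ^ p ^ (v + 1) - 1 : ℤ[X]) H y ∈
        Ideal.span {(p : R) ^ (v + 1)} := fun y => by
      rw [aeval_shiftₗ_X_pow_sub_one, Ideal.mem_span_singleton]
      exact hH _ le_rfl y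
    rw [map_add, map_mul, map_mul, map_natCast, LinearMap.add_apply, Module.End.mul_apply,
      Module.End.mul_apply, Pi.add_apply, Module.End.natCast_apply, Pi.smul_apply, nsmul_eq_mul]
    rw [pow_succ'] at hY ⊢
    refine dvd_add (mul_dvd_mul_left _ (ih (fun i hi => hH i (hi.trans v.le_succ)) hb x)) ?_
    exact Ideal.mem_span_singleton.1 (aeval_shiftₗ_mem hY c x)

theorem fwdDiff_iter_eq_zero_of_natCast_pow_dvd {p e : ℕ} (hp : p.Prime) (hpe : (p : R) ^ e = 0)
    {H : ℕ → R} (hH : ∀ i ≤ e, ∀ x, (p : R) ^ i ∣ H (x + p ^ i) - H x) {k : ℕ}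
    (hk : p ^ e ≤ k) : (Δ_[1])^[k] H = 0 := by
  have hpow : (Δ_[1])^[p ^ e] H = 0 := funext fun x => by
    have := natCast_pow_dvd_aeval_shiftₗ e hH (X_sub_one_pow_mem_diffIdeal hp e) x
    rwa [hpe, zero_dvd_iff, aeval_shiftₗ_X_sub_one_pow] at this
  obtain ⟨j, rfl⟩ := Nat.exists_eq_add_of_le' hk
  rw [Function.iterate_add_apply, hpow]
  exact Function.iterate_fixed (fwdDiff_const 1 (0 : R)) j

lemma eq_sum_fwdDiff_iter_mul_choose {H : ℕ → R} {K x : ℕ}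
    (hH : ∀ k, K ≤ k → k ≤ x → (Δ_[1])^[k] H 0 = 0) :
    H x = ∑ k ∈ Finset.range K, (Δ_[1])^[k] H 0 * (x.choose k : R) := by
  have hnewton := shift_eq_sum_fwdDiff_iter 1 H x 0
  rw [zero_add, smul_eq_mul, mul_one] at hnewton
  rw [hnewton, ← Finset.sum_subset (Finset.range_subset_range.2 (min_le_right K (x + 1))),
    ← Finset.sum_subset (Finset.range_subset_range.2 (min_le_left K (x + 1)))]
  · exact Finset.sum_congr rfl fun k _ => by rw [nsmul_eq_mul, mul_comm]
  · intro k hk hk'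
    simp only [Finset.mem_range, lt_min_iff, not_and_or, not_lt] at hk hk'
    rw [Nat.choose_eq_zero_of_lt (by omega), Nat.cast_zero, mul_zero]
  · intro k hk hk'
    simp only [Finset.mem_range, lt_min_iff, not_and_or, not_lt] at hk hk'
    rw [hH k (by omega) (by omega), smul_zero]

end shift

lemma ZMod.natCast_dvd_sub_of_castHom_eq {d q : ℕ} [NeZero q] (h : d ∣ q) {y z : ZMod q}
    (hyz : ZMod.castHom h (ZMod d) y = ZMod.castHom h (ZMod d) z) : (d : ZMod q) ∣ y - z := by
  rw [← sub_eq_zero, ← map_sub, ← ZMod.natCast_zmod_val (y - z), map_natCast,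
    ZMod.natCast_eq_zero_iff] at hyz
  obtain ⟨c, hc⟩ := hyz
  exact ⟨c, by rw [← ZMod.natCast_zmod_val (y - z), hc, Nat.cast_mul]⟩

lemma ZMod.equivPi_apply {m : ℕ} (hm : m ≠ 0) (z : ZMod m) (p : m.primeFactors) :
    ZMod.equivPi m hm z p = ZMod.castHom (Nat.ordProj_dvd m p) _ z :=
  RingHom.congr_fun
    (RingHom.ext_zmod ((Pi.evalRingHom _ p).comp (ZMod.equivPi m hm).toRingHom) _) z

lemma ordProj_le_mu {m p : ℕ} (hp : p ∈ m.primeFactors) : p ^ m.factorization p ≤ mu m :=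
  Finset.le_sup (f := fun p => p ^ m.factorization p) hp

lemma CongPres.exists_castHom_eq_sum_choose {n m p e : ℕ} {f : ZMod n → ZMod m}
    (hf : CongPres n m f) (hp : p.Prime) (hpe : p ^ e ∣ m) {K : ℕ} (hK : p ^ e ≤ K) :
    ∃ b : ℕ → ZMod (p ^ e), ∀ x < n,
      ZMod.castHom hpe _ (f x) = ∑ k ∈ Finset.range K, b k * (x.choose k : ZMod (p ^ e)) := by
  have hq : 0 < p ^ e := pow_pos hp.pos e
  have : NeZero (p ^ e) := ⟨hq.ne'⟩
  set g : ℕ → ZMod (p ^ e) := fun a => ZMod.castHom hpe _ (f a)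
  by_cases hn : n < p ^ e
  · exact ⟨fun k => (Δ_[1])^[k] g 0, fun x hx =>
    eq_sum_fwdDiff_iter_mul_choose (H := g) (K := K) fun k hk hkx => by omega⟩
  -- On the `p ^ e`-periodic extension of `g`, congruence preservation holds on all of `ℕ`.
  set H : ℕ → ZMod (p ^ e) := fun y => g (y % p ^ e)
  have hmod : ∀ y, y % p ^ e < n := fun y => (Nat.mod_lt y hq).trans_le (not_lt.1 hn)
  have hHg : ∀ x < n, H x = g x := fun x hx => hf _ hpe _ _ (hmod x) hx (Nat.mod_modEq x _)
  have hH : ∀ i ≤ e, ∀ y, (p : ZMod (p ^ e)) ^ i ∣ H (y + p ^ i) - H y := by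
    intro i hi y
    have hdvd : p ^ i ∣ p ^ e := pow_dvd_pow p hi
    rw [← Nat.cast_pow]
    refine ZMod.natCast_dvd_sub_of_castHom_eq hdvd ?_
    simp only [H, g, ← RingHom.comp_apply, ZMod.castHom_comp]
    refine hf _ _ _ _ (hmod _) (hmod _) ?_
    exact ((Nat.mod_modEq _ _).of_dvd hdvd).trans
      ((Nat.add_modEq_left_iff.2 dvd_rfl).trans ((Nat.mod_modEq _ _).of_dvd hdvd).symm)
  have hpe0 : (p : ZMod (p ^ e)) ^ e = 0 := by rw [← Nat.cast_pow, ZMod.natCast_self]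
  refine ⟨fun k => (Δ_[1])^[k] H 0, fun x hx => ?_⟩
  change g x = _
  rw [← hHg x hx]
  exact eq_sum_fwdDiff_iter_mul_choose fun k hk _ => by
    rw [fwdDiff_iter_eq_zero_of_natCast_pow_dvd hp hpe0 hH (hK.trans hk), Pi.zero_apply]

theorem stmt_13 (n m : ℕ) (hn : 1 ≤ n) (hm : 2 ≤ m) (f : ZMod n → ZMod m)
    (hcp : CongPres n m f) :
    ∃ p : ℕ, p < mu m ∧ ∃ a : ℕ → ZMod m,
      ∀ x : ZMod n, f x = ∑ k ∈ Finset.range (p + 1), a k * (Nat.choose x.val k : ZMod m) := by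
  have : NeZero n := ⟨by omega⟩
  have hm0 : m ≠ 0 := by omega
  obtain ⟨q, hq⟩ := Nat.nonempty_primeFactors.2 hm
  have hμ : 0 < mu m :=
    (pow_pos (Nat.prime_of_mem_primeFactors hq).pos _).trans_le (ordProj_le_mu hq)
  choose b hb using fun p : m.primeFactors =>
    hcp.exists_castHom_eq_sum_choose (Nat.prime_of_mem_primeFactors p.2) (Nat.ordProj_dvd m p)
      (ordProj_le_mu p.2)
  refine ⟨mu m - 1, by omega, fun k => (ZMod.equivPi m hm0).symm fun p => b p k, fun x => ?_⟩
  rw [Nat.sub_add_cancel hμ]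
  refine (ZMod.equivPi m hm0).injective (funext fun p => ?_)
  have hx := hb p x.val x.val_lt
  rw [ZMod.natCast_zmod_val] at hx
  rw [ZMod.equivPi_apply, ZMod.equivPi_apply, hx, map_sum]
  refine Finset.sum_congr rfl fun k _ => ?_
  rw [map_mul, map_natCast, ← ZMod.equivPi_apply hm0, RingEquiv.apply_symm_apply]
end

section
/- Let m ≥ 2 with prime factorization m = p_1^{e_1} p_2^{e_2} ⋯ p_ℓ^{e_ℓ} and let n ≥ μ(m). Then the number CP(n, m) of congruence preserving functions ℤ/nℤ → ℤ/mℤ equals Π_{i=1}^{ℓ} p_i^{(p_i + p_i^2 + ⋯ + p_i^{e_i})}. -/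
/-!
Congruence preservation is compatible with the Chinese remainder theorem, so `CP n` is
multiplicative in `m` and it suffices to count for `m = p ^ e`. For `0 < a < n` let `p ^ t(a)` be
the largest power `p ^ j ≤ a` with `j ≤ e`, and call `a mod p ^ t(a) < a` the parent of `a`.
A function is congruence preserving iff `f a ≡ f (parent a) [mod p ^ t(a)]` for every `a`, so it is
freely determined by `f 0` and one of `p ^ (e - t(a))` increments at each `a > 0`. Finally
`∑_{a < n} (e - t(a)) = ∑_{i=1}^e min(n, p ^ i)`, which is `∑ p ^ i` once `n ≥ p ^ e`.
-/

open Finset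

namespace ZMod

theorem castHom_eq_castHom_of_dvd {m d d' : ℕ} (hd' : d' ∣ d) (hd : d ∣ m) {x y : ZMod m}
    (h : castHom hd (ZMod d) x = castHom hd (ZMod d) y) :
    castHom (hd'.trans hd) (ZMod d') x = castHom (hd'.trans hd) (ZMod d') y := by
  rw [← castHom_comp hd' hd, RingHom.comp_apply, RingHom.comp_apply, h]

theorem fst_chineseRemainder {m₁ m₂ : ℕ} (h : m₁.Coprime m₂) (x : ZMod (m₁ * m₂)) :
    (chineseRemainder h x).1 = castHom (dvd_mul_right m₁ m₂) (ZMod m₁) x :=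
  RingHom.congr_fun (RingHom.ext_zmod ((RingHom.fst _ _).comp (chineseRemainder h).toRingHom) _) x

theorem snd_chineseRemainder {m₁ m₂ : ℕ} (h : m₁.Coprime m₂) (x : ZMod (m₁ * m₂)) :
    (chineseRemainder h x).2 = castHom (dvd_mul_left m₂ m₁) (ZMod m₂) x :=
  RingHom.congr_fun (RingHom.ext_zmod ((RingHom.snd _ _).comp (chineseRemainder h).toRingHom) _) x

theorem castHom_mul_eq_of_coprime {m d₁ d₂ : ℕ} (hco : d₁.Coprime d₂) (hd : d₁ * d₂ ∣ m)
    {x y : ZMod m}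
    (h₁ : castHom (dvd_of_mul_right_dvd hd) (ZMod d₁) x =
      castHom (dvd_of_mul_right_dvd hd) (ZMod d₁) y)
    (h₂ : castHom (dvd_of_mul_left_dvd hd) (ZMod d₂) x =
      castHom (dvd_of_mul_left_dvd hd) (ZMod d₂) y) :
    castHom hd (ZMod (d₁ * d₂)) x = castHom hd (ZMod (d₁ * d₂)) y := by
  refine (chineseRemainder hco).injective (Prod.ext ?_ ?_)
  · rw [fst_chineseRemainder, fst_chineseRemainder, ← RingHom.comp_apply, castHom_comp,
      ← RingHom.comp_apply, castHom_comp]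
    exact h₁
  · rw [snd_chineseRemainder, snd_chineseRemainder, ← RingHom.comp_apply, castHom_comp,
      ← RingHom.comp_apply, castHom_comp]
    exact h₂

theorem card_ker_castHom_mul_eq {m d : ℕ} (hd : d ∣ m) :
    Nat.card (castHom hd (ZMod d)).toAddMonoidHom.ker * d = m := by
  set φ := (castHom hd (ZMod d)).toAddMonoidHom
  have hquot : Nat.card (ZMod m ⧸ φ.ker) = d := by
    rw [Nat.card_congr (QuotientAddGroup.quotientKerEquivOfSurjective φ
      (castHom_surjective hd)).toEquiv, Nat.card_zmod]
  calc Nat.card φ.ker * d = Nat.card φ.ker * φ.ker.index := by rw [AddSubgroup.index, hquot]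
    _ = m := by rw [AddSubgroup.card_mul_index, Nat.card_zmod]

theorem sum_univ_val {n : ℕ} [NeZero n] {M : Type*} [AddCommMonoid M] (g : ℕ → M) :
    ∑ x : ZMod n, g x.val = ∑ a ∈ range n, g a :=
  sum_nbij' val Nat.cast (by simp [val_lt]) (by simp) (by simp)
    (fun _ ha => val_natCast_of_lt (mem_range.mp ha)) (by simp)

end ZMod

theorem congPres_castHom_comp_iff {n m M : ℕ} (hm : m ∣ M) (f : ZMod n → ZMod M) :
    CongPres n m (fun x => ZMod.castHom hm (ZMod m) (f x)) ↔
      ∀ d (hd : d ∣ m), ∀ a b : ℕ, a < n → b < n → a ≡ b [MOD d] →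
        ZMod.castHom (hd.trans hm) (ZMod d) (f a) = ZMod.castHom (hd.trans hm) (ZMod d) (f b) := by
  simp only [CongPres, ← RingHom.comp_apply, ZMod.castHom_comp]

theorem congPres_mul_iff {n m₁ m₂ : ℕ} (h : m₁.Coprime m₂) (f : ZMod n → ZMod (m₁ * m₂)) :
    CongPres n (m₁ * m₂) f ↔
      CongPres n m₁ (fun x => (ZMod.chineseRemainder h (f x)).1) ∧
        CongPres n m₂ (fun x => (ZMod.chineseRemainder h (f x)).2) := by
  simp only [ZMod.fst_chineseRemainder, ZMod.snd_chineseRemainder]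
  rw [congPres_castHom_comp_iff, congPres_castHom_comp_iff]
  refine ⟨fun hf => ⟨fun d hd => hf d _, fun d hd => hf d _⟩, ?_⟩
  rintro ⟨hf₁, hf₂⟩ d hd a b ha hb hab
  obtain ⟨d₁, d₂, hd₁, hd₂, rfl⟩ := Nat.dvd_mul.mp hd
  exact ZMod.castHom_mul_eq_of_coprime ((h.coprime_dvd_left hd₁).coprime_dvd_right hd₂) hd
    (hf₁ d₁ hd₁ a b ha hb (Nat.ModEq.of_mul_right d₂ hab))
    (hf₂ d₂ hd₂ a b ha hb (Nat.ModEq.of_mul_left d₁ hab))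

theorem CP_mul {m₁ m₂ : ℕ} (n : ℕ) (h : m₁.Coprime m₂) : CP n (m₁ * m₂) = CP n m₁ * CP n m₂ := by
  let e : (ZMod n → ZMod (m₁ * m₂)) ≃ (ZMod n → ZMod m₁) × (ZMod n → ZMod m₂) :=
    (Equiv.arrowCongr (Equiv.refl _) (ZMod.chineseRemainder h).toEquiv).trans
      (Equiv.arrowProdEquivProdArrow _ _ _)
  rw [CP, CP, CP, ← Nat.card_prod, Nat.card_congr ((e.subtypeEquiv (congPres_mul_iff h)).trans
    Equiv.subtypeProdEquivProd)]

theorem CP_one (n : ℕ) : CP n 1 = 1 := by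
  rw [CP, Nat.card_eq_one_iff_unique]
  exact ⟨inferInstance, ⟨⟨fun _ => 0, fun _ _ _ _ _ _ _ => rfl⟩⟩⟩

theorem card_subtype_forall_sub_mem {ι G : Type*} [Fintype ι] [AddGroup G] [Finite G]
    (π : ι → ι) (r : ι → ℕ) (S : ι → Set G) (hS : ∀ i, r i ≤ r (π i) → S i = Set.univ) :
    Nat.card {f : ι → G // ∀ i, f i - f (π i) ∈ S i} = ∏ i, Nat.card (S i) := by
  classical
  let D : (ι → G) → ι → G := fun f i => if r (π i) < r i then f i - f (π i) else f i
  have hD : D.Injective := by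
    intro f g hfg
    suffices h : ∀ k i, r i < k → f i = g i from funext fun i => h _ i (Nat.lt_succ_self _)
    intro k
    induction k with
    | zero => intro i hi; omega
    | succ k ih =>
      intro i hi
      have hi' := congrFun hfg i
      by_cases hπ : r (π i) < r i
      · simp only [D, if_pos hπ, ih (π i) (by omega)] at hi'
        exact sub_left_injective hi'
      · simpa only [D, if_neg hπ] using hi'
  let e := Equiv.ofBijective D (Finite.injective_iff_bijective.mp hD)
  have he : ∀ f : ι → G, (∀ i, f i - f (π i) ∈ S i) ↔ ∀ i, e f i ∈ S i := fun f =>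
    forall_congr' fun i => by
      by_cases hπ : r (π i) < r i
      · simp only [e, D, Equiv.ofBijective_apply, if_pos hπ]
      · simp [e, D, hπ, hS i (not_lt.mp hπ)]
  rw [Nat.card_congr ((e.subtypeEquiv he).trans Equiv.subtypePiEquivPi), Nat.card_pi]

theorem congPres_iff_val {n m : ℕ} [NeZero n] (f : ZMod n → ZMod m) :
    CongPres n m f ↔ ∀ d (hd : d ∣ m) (x y : ZMod n), x.val ≡ y.val [MOD d] →
      ZMod.castHom hd (ZMod d) (f x) = ZMod.castHom hd (ZMod d) (f y) := by
  refine ⟨fun h d hd x y hxy => ?_, fun h d hd a b ha hb hab => h d hd a b ?_⟩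
  · simpa only [ZMod.natCast_zmod_val] using h d hd _ _ x.val_lt y.val_lt hxy
  · rwa [ZMod.val_natCast_of_lt ha, ZMod.val_natCast_of_lt hb]

/-- `p ^ truncLog p e a` is the largest `p ^ j ≤ a` with `j ≤ e`, and `1` when `a = 0`. -/
def truncLog (p e a : ℕ) : ℕ := min e (Nat.log p a)

section truncLog

variable {p e : ℕ}

theorem truncLog_le (a : ℕ) : truncLog p e a ≤ e := min_le_left _ _

theorem pow_truncLog_le (hp : 1 < p) {a : ℕ} (ha : a ≠ 0) : p ^ truncLog p e a ≤ a :=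
  (Nat.pow_le_pow_right hp.le (min_le_right _ _)).trans (Nat.pow_log_le_self p ha)

theorem le_truncLog (hp : 1 < p) {a j : ℕ} (hj : j ≤ e) (h : p ^ j ≤ a) : j ≤ truncLog p e a :=
  le_min hj (Nat.le_log_of_pow_le hp h)

theorem lt_pow_iff_truncLog_lt (hp : 1 < p) (a : ℕ) {i : ℕ} (hi : i ∈ Icc 1 e) :
    a < p ^ i ↔ truncLog p e a < i := by
  rw [mem_Icc] at hi
  rcases eq_or_ne a 0 with rfl | ha
  · simp only [truncLog, Nat.log_zero_right, _root_.min_zero]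
    exact ⟨fun _ => hi.1, fun _ => by positivity⟩
  · rw [← Nat.log_lt_iff_lt_pow hp ha, truncLog, min_lt_iff]
    omega

theorem sum_sub_truncLog (hp : 1 < p) (n : ℕ) :
    ∑ a ∈ range n, (e - truncLog p e a) = ∑ i ∈ Icc 1 e, min n (p ^ i) := by
  have hcount : ∀ a, e - truncLog p e a = #{i ∈ Icc 1 e | a < p ^ i} := fun a => by
    rw [filter_congr fun i hi => lt_pow_iff_truncLog_lt hp a hi]
    have : {i ∈ Icc 1 e | truncLog p e a < i} = Ioc (truncLog p e a) e := by
      ext i; simp only [mem_filter, mem_Icc, mem_Ioc]; omega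
    rw [this, Nat.card_Ioc]
  have hrange : ∀ k, #{a ∈ range n | a < k} = min n k := fun k => by
    rw [show {a ∈ range n | a < k} = range (min n k) by ext a; simp only [mem_filter,
      mem_range, lt_min_iff], card_range]
  simp only [hcount, card_filter]
  rw [sum_comm]
  simp only [← card_filter, hrange]

end truncLog

def parent {n : ℕ} (p e : ℕ) (x : ZMod n) : ZMod n := (x.val % p ^ truncLog p e x.val : ℕ)

section parent

variable {n p e : ℕ} [NeZero n]

theorem val_parent (x : ZMod n) : (parent p e x).val = x.val % p ^ truncLog p e x.val :=
  ZMod.val_natCast_of_lt ((Nat.mod_le _ _).trans_lt x.val_lt)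

theorem val_parent_lt (hp : 1 < p) {x : ZMod n} (hx : x.val ≠ 0) : (parent p e x).val < x.val := by
  rw [val_parent]
  exact (Nat.mod_lt _ (by positivity)).trans_le (pow_truncLog_le hp hx)

theorem congPres_prime_pow_iff (hp : p.Prime) (f : ZMod n → ZMod (p ^ e)) :
    CongPres n (p ^ e) f ↔ ∀ x : ZMod n,
      ZMod.castHom (pow_dvd_pow p (truncLog_le x.val)) (ZMod (p ^ truncLog p e x.val)) (f x) =
        ZMod.castHom (pow_dvd_pow p (truncLog_le x.val)) _ (f (parent p e x)) := by
  rw [congPres_iff_val]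
  refine ⟨fun hf x => hf _ _ x (parent p e x) ?_, fun hloc d hd x y hxy => ?_⟩
  · rw [val_parent]
    exact (Nat.mod_modEq _ _).symm
  obtain ⟨j, hj, rfl⟩ := (Nat.dvd_prime_pow hp).mp hd
  have key : ∀ x : ZMod n, ZMod.castHom hd (ZMod (p ^ j)) (f x) =
      ZMod.castHom hd (ZMod (p ^ j)) (f (x.val % p ^ j : ℕ)) := by
    -- While `p ^ j ≤ x`, passing to the parent keeps both `f x` mod `p ^ j` and `x.val % p ^ j`.
    intro x
    induction hx : x.val using Nat.strong_induction_on generalizing x with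
    | _ a ih =>
      by_cases hlt : a < p ^ j
      · rw [← hx, Nat.mod_eq_of_lt (hx ▸ hlt), ZMod.natCast_zmod_val]
      have hq : p ^ j ∣ p ^ truncLog p e x.val :=
        pow_dvd_pow p (le_truncLog hp.one_lt hj (hx ▸ not_lt.mp hlt))
      have ha : x.val ≠ 0 := by
        have := Nat.one_le_pow j p hp.pos
        omega
      rw [ZMod.castHom_eq_castHom_of_dvd hq _ (hloc x),
        ih _ (hx ▸ val_parent_lt hp.one_lt ha) _ rfl, val_parent, Nat.mod_mod_of_dvd _ hq, hx]
  rw [key x, key y, show x.val % p ^ j = y.val % p ^ j from hxy]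

end parent

theorem CP_prime_pow {p : ℕ} (hp : p.Prime) (n e : ℕ) [NeZero n] :
    CP n (p ^ e) = p ^ ∑ i ∈ Icc 1 e, min n (p ^ i) := by
  have : NeZero (p ^ e) := ⟨pow_ne_zero e hp.ne_zero⟩
  have ht : ∀ a, p ^ truncLog p e a ∣ p ^ e := fun a => pow_dvd_pow p (truncLog_le a)
  let S : ZMod n → Set (ZMod (p ^ e)) := fun x =>
    (ZMod.castHom (ht x.val) (ZMod (p ^ truncLog p e x.val))).toAddMonoidHom.ker
  have hS : ∀ x : ZMod n, x.val ≤ (parent p e x).val → S x = Set.univ := by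
    intro x hx
    have h0 : x.val = 0 := by
      by_contra h
      exact (val_parent_lt hp.one_lt h).not_ge hx
    have : Subsingleton (ZMod (p ^ truncLog p e x.val)) := ZMod.subsingleton_iff.mpr (by
      rw [h0, truncLog, Nat.log_zero_right, _root_.min_zero, pow_zero])
    exact Set.eq_univ_of_forall fun _ => Subsingleton.elim _ _
  have hcard : ∀ x, Nat.card (S x) = p ^ (e - truncLog p e x.val) := fun x =>
    (Nat.eq_div_of_mul_eq_left (pow_pos hp.pos _).ne'
      (ZMod.card_ker_castHom_mul_eq (ht x.val))).trans (Nat.pow_div (truncLog_le x.val) hp.pos)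
  calc CP n (p ^ e) = Nat.card {f : ZMod n → ZMod (p ^ e) // ∀ x, f x - f (parent p e x) ∈ S x} :=
        Nat.card_congr <| Equiv.subtypeEquivRight fun f => by
          simp only [congPres_prime_pow_iff hp, S, SetLike.mem_coe, AddMonoidHom.mem_ker,
            RingHom.toAddMonoidHom_eq_coe, AddMonoidHom.coe_coe, map_sub, sub_eq_zero]
    _ = p ^ ∑ a ∈ range n, (e - truncLog p e a) := by
      rw [card_subtype_forall_sub_mem _ ZMod.val S hS, ← ZMod.sum_univ_val, ← prod_pow_eq_pow_sum]
      exact prod_congr rfl fun x _ => hcard x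
    _ = p ^ ∑ i ∈ Icc 1 e, min n (p ^ i) := by rw [sum_sub_truncLog hp.one_lt]

theorem stmt_15 (n m : ℕ) (hm : 2 ≤ m) (hn : mu m ≤ n) :
    CP n m = ∏ p ∈ m.primeFactors, p ^ (∑ i ∈ Finset.Icc 1 (m.factorization p), p ^ i) := by
  rw [Nat.multiplicative_factorization (CP n) (fun _ _ => CP_mul n) (CP_one n) (by omega),
    Finsupp.prod, Nat.support_factorization]
  refine prod_congr rfl fun p hp => ?_
  have hp' := Nat.prime_of_mem_primeFactors hp
  have hpow : p ^ m.factorization p ≤ n :=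
    (le_sup (f := fun q => q ^ m.factorization q) hp).trans hn
  have : NeZero n := ⟨((pow_pos hp'.pos _).trans_le hpow).ne'⟩
  rw [CP_prime_pow hp']
  refine congrArg (p ^ ·) (sum_congr rfl fun i hi => min_eq_right ?_)
  exact (Nat.pow_le_pow_right hp'.pos (mem_Icc.mp hi).2).trans hpow
end

section
/- Let n ≥ 1 and m ≥ 2 with prime factorization m = p_1^{e_1} p_2^{e_2} ⋯ p_ℓ^{e_ℓ}. Then the number of congruence preserving functions ℤ/nℤ → ℤ/mℤ equals the product over i = 1, …, ℓ of the number of congruence preserving functions ℤ/nℤ → ℤ/p_i^{e_i}ℤ, i.e., CP(n, m) = Π_{i=1}^{ℓ} CP(n, p_i^{e_i}). -/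
/-- Reformulation of `CongPres` in terms of `Nat.ModEq` of values. -/
lemma congPres_iff {n m : ℕ} (hm : m ≠ 0) (f : ZMod n → ZMod m) :
    CongPres n m f ↔ ∀ d : ℕ, d ∣ m → ∀ a b : ℕ, a < n → b < n → a ≡ b [MOD d] →
      (f a).val ≡ (f b).val [MOD d] := by
  haveI : NeZero m := ⟨hm⟩
  constructor
  · intro h d hd a b ha hb hab
    have H := h d hd a b ha hb hab
    rwa [ZMod.castHom_apply, ZMod.castHom_apply, ← ZMod.natCast_val, ← ZMod.natCast_val,
      ZMod.natCast_eq_natCast_iff] at H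
  · intro h d hd a b ha hb hab
    have H := h d hd a b ha hb hab
    rwa [ZMod.castHom_apply, ZMod.castHom_apply, ← ZMod.natCast_val, ← ZMod.natCast_val,
      ZMod.natCast_eq_natCast_iff]

lemma prod_pf_eq {m d : ℕ} (hm : m ≠ 0) (hd : d ∣ m) :
    ∏ p ∈ m.primeFactors, p ^ d.factorization p = d := by
  have hd0 : d ≠ 0 := fun h => hm (by simpa [h] using hd)
  conv_rhs => rw [← Nat.factorization_prod_pow_eq_self hd0]
  rw [Finsupp.prod, Nat.support_factorization]
  exact (Finset.prod_subset (Nat.primeFactors_mono hd hm) (fun p _ hp => by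
    rw [Finsupp.notMem_support_iff.mp (by rwa [Nat.support_factorization]), pow_zero])).symm

lemma modeq_split {m d : ℕ} (hm : m ≠ 0) (hd : d ∣ m) (z w : ℕ) :
    z ≡ w [MOD d] ↔ ∀ p ∈ m.primeFactors, z ≡ w [MOD p ^ d.factorization p] := by
  constructor
  · intro h p hp
    exact h.of_dvd (Nat.ordProj_dvd d p)
  · intro h
    rw [Nat.modEq_iff_dvd]
    have heq : ((d : ℤ)) = ∏ p ∈ m.primeFactors, (p : ℤ) ^ d.factorization p := by
      have h1 := prod_pf_eq hm hd
      exact_mod_cast h1.symm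
    rw [heq]
    refine Finset.prod_dvd_of_coprime ?_ (fun p hp => ?_)
    · intro p hp r hr hpr
      have hp' := Nat.prime_of_mem_primeFactors hp
      have hr' := Nat.prime_of_mem_primeFactors hr
      have : Nat.Coprime (p ^ d.factorization p) (r ^ d.factorization r) :=
        Nat.Coprime.pow _ _ ((Nat.coprime_primes hp' hr').mpr hpr)
      simpa using Nat.isCoprime_iff_coprime.mpr this
    · have := (h p hp).dvd
      simpa using this

lemma psi_inj {m : ℕ} (hm : m ≠ 0) {x y : ZMod m}
    (h : ∀ p ∈ m.primeFactors,
      ((x.val : ZMod (p ^ m.factorization p))) = (y.val : ZMod (p ^ m.factorization p))) :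
    x = y := by
  haveI : NeZero m := ⟨hm⟩
  have h1 : x.val ≡ y.val [MOD m] := by
    rw [modeq_split hm dvd_rfl]
    intro p hp
    exact (ZMod.natCast_eq_natCast_iff _ _ _).mp (h p hp)
  have h2 := (ZMod.natCast_eq_natCast_iff _ _ m).mpr h1
  rwa [ZMod.natCast_val, ZMod.natCast_val, ZMod.cast_id, ZMod.cast_id] at h2

lemma psi_surj {m : ℕ} (hm : m ≠ 0)
    (v : ∀ p : m.primeFactors, ZMod ((p : ℕ) ^ m.factorization p)) :
    ∃ x : ZMod m, ∀ p : m.primeFactors, ((x.val : ZMod ((p : ℕ) ^ m.factorization p))) = v p := by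
  haveI : NeZero m := ⟨hm⟩
  haveI : ∀ p : m.primeFactors, NeZero ((p : ℕ) ^ m.factorization p) :=
    fun p => ⟨pow_ne_zero _ (Nat.prime_of_mem_primeFactors p.2).ne_zero⟩
  set Ψ : ZMod m → ∀ p : m.primeFactors, ZMod ((p : ℕ) ^ m.factorization p) :=
    fun x p => (x.val : ZMod ((p : ℕ) ^ m.factorization p)) with hΨ
  have hinj : Function.Injective Ψ := fun x y hxy =>
    psi_inj hm (fun p hp => congrFun hxy ⟨p, hp⟩)
  have hcard : Fintype.card (ZMod m) =
      Fintype.card (∀ p : m.primeFactors, ZMod ((p : ℕ) ^ m.factorization p)) := by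
    rw [Fintype.card_pi]
    simp only [ZMod.card]
    rw [Finset.prod_coe_sort m.primeFactors (fun p => p ^ m.factorization p)]
    rw [prod_pf_eq hm dvd_rfl]
  obtain ⟨x, hx⟩ := ((Fintype.bijective_iff_injective_and_card Ψ).mpr ⟨hinj, hcard⟩).2 v
  exact ⟨x, fun p => congrFun hx p⟩

theorem stmt_16 (n m : ℕ) (hn : 1 ≤ n) (hm : 2 ≤ m) :
    CP n m = ∏ p ∈ m.primeFactors, CP n (p ^ m.factorization p) := by
  classical
  have hm0 : m ≠ 0 := by omega
  haveI : NeZero m := ⟨hm0⟩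
  have hq0 : ∀ p : m.primeFactors, ((p : ℕ) ^ m.factorization p) ≠ 0 :=
    fun p => pow_ne_zero _ (Nat.prime_of_mem_primeFactors p.2).ne_zero
  have hqdvd : ∀ p : m.primeFactors, ((p : ℕ) ^ m.factorization p) ∣ m :=
    fun p => Nat.ordProj_dvd m p
  -- the componentwise property
  have hΦprop : ∀ (f : {f : ZMod n → ZMod m // CongPres n m f}) (p : m.primeFactors),
      CongPres n ((p : ℕ) ^ m.factorization p)
        (fun x => (((f.1 x).val : ℕ) : ZMod ((p : ℕ) ^ m.factorization p))) := by
    intro f p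
    haveI : NeZero ((p : ℕ) ^ m.factorization p) := ⟨hq0 p⟩
    rw [congPres_iff (hq0 p)]
    intro d hd a b ha hb hab
    have hf := (congPres_iff hm0 f.1).mp f.2 d (hd.trans (hqdvd p)) a b ha hb hab
    simp only [ZMod.val_natCast]
    calc (f.1 a).val % ((p : ℕ) ^ m.factorization p)
        ≡ (f.1 a).val [MOD d] := (Nat.mod_modEq _ _).of_dvd hd
      _ ≡ (f.1 b).val [MOD d] := hf
      _ ≡ (f.1 b).val % ((p : ℕ) ^ m.factorization p) [MOD d] :=
          ((Nat.mod_modEq _ _).of_dvd hd).symm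
  let Φ : {f : ZMod n → ZMod m // CongPres n m f} →
      ∀ p : m.primeFactors, {g : ZMod n → ZMod ((p : ℕ) ^ m.factorization p) //
        CongPres n ((p : ℕ) ^ m.factorization p) g} :=
    fun f p => ⟨fun x => (((f.1 x).val : ℕ) : ZMod ((p : ℕ) ^ m.factorization p)), hΦprop f p⟩
  have hbij : Function.Bijective Φ := by
    constructor
    · intro f g h
      apply Subtype.ext
      funext x
      apply psi_inj hm0
      intro p hp
      exact congrFun (congrArg Subtype.val (congrFun h ⟨p, hp⟩)) x
    · intro v
      choose F hF using fun x => psi_surj hm0 (fun p => (v p).1 x)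
      have hFcp : CongPres n m F := by
        rw [congPres_iff hm0]
        intro d hd a b ha hb hab
        have hd0 : d ≠ 0 := fun h => hm0 (by simpa [h] using hd)
        rw [modeq_split hm0 hd]
        intro p hp
        set P : m.primeFactors := ⟨p, hp⟩
        haveI : NeZero ((P : ℕ) ^ m.factorization (P : ℕ)) := ⟨hq0 P⟩
        have hle : d.factorization p ≤ m.factorization p :=
          (Nat.factorization_le_iff_dvd hd0 hm0).mpr hd p
        have hpd : p ^ d.factorization p ∣ p ^ m.factorization p := pow_dvd_pow p hle
        have key : ∀ x : ZMod n,
            ((F x).val : ZMod (p ^ m.factorization p)) = ((((v P).1 x).val : ℕ) : ZMod (p ^ m.factorization p)) := by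
          intro x
          rw [hF x P, ZMod.natCast_val, ZMod.cast_id]
        have h1 : (F a).val ≡ ((v P).1 a).val [MOD p ^ m.factorization p] :=
          (ZMod.natCast_eq_natCast_iff _ _ _).mp (key a)
        have h2 : (F b).val ≡ ((v P).1 b).val [MOD p ^ m.factorization p] :=
          (ZMod.natCast_eq_natCast_iff _ _ _).mp (key b)
        have h3 : ((v P).1 a).val ≡ ((v P).1 b).val [MOD p ^ d.factorization p] :=
          (congPres_iff (hq0 P) (v P).1).mp (v P).2 (p ^ d.factorization p) hpd a b ha hb
            (hab.of_dvd (Nat.ordProj_dvd d p))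
        calc (F a).val ≡ ((v P).1 a).val [MOD p ^ d.factorization p] := h1.of_dvd hpd
          _ ≡ ((v P).1 b).val [MOD p ^ d.factorization p] := h3
          _ ≡ (F b).val [MOD p ^ d.factorization p] := (h2.of_dvd hpd).symm
      refine ⟨⟨F, hFcp⟩, ?_⟩
      funext p
      apply Subtype.ext
      funext x
      exact hF x p
  rw [CP, Nat.card_eq_of_bijective Φ hbij, Nat.card_pi]
  exact Finset.prod_coe_sort m.primeFactors (fun p => CP n (p ^ m.factorization p))
end

section
/- Let p be a prime, e ≥ 1 and n ≥ 1. The number CP(n, p^e) of congruence preserving functions ℤ/nℤ → ℤ/p^eℤ equals p^{e·n − Σ_{k=1}^{n−1} min(e, ⌊log_p k⌋)}. -/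
/-!
A congruence preserving `f` is determined by its values `f 0, …, f (n - 1)`, chosen in turn.
Once `f 0, …, f (k - 1)` are fixed, the constraints on `f k` are `f k ≡ f a [MOD p ^ j]` for
`a < k` with `p ^ j ∣ k - a`. Such `p ^ j` is at most `k`, so it divides `p ^ J` with
`J = min e (log p k)`, and all constraints follow from the single one for `a = k - p ^ J`.
Hence `f k` ranges over a residue class mod `p ^ J`, which leaves `p ^ (e - J)` choices.
-/

section SnocSubtype

variable {α : Type*} {n : ℕ} {P : (Fin (n + 1) → α) → Prop} {Q : (Fin n → α) → Prop}
  {R : (Fin n → α) → α → Prop}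

def Fin.snocSubtypeEquiv (h : ∀ g x, P (Fin.snoc g x) ↔ Q g ∧ R g x) :
    {f // P f} ≃ Σ g : {g // Q g}, {x // R g x} where
  toFun f :=
    have hf := (h (Fin.init f.1) (f.1 (Fin.last n))).1 (by rw [Fin.snoc_init_self]; exact f.2)
    ⟨⟨Fin.init f.1, hf.1⟩, ⟨f.1 (Fin.last n), hf.2⟩⟩
  invFun gx := ⟨Fin.snoc gx.1.1 gx.2.1, (h _ _).2 ⟨gx.1.2, gx.2.2⟩⟩
  left_inv f := Subtype.ext (Fin.snoc_init_self f.1)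
  right_inv gx := Sigma.subtype_ext (Subtype.ext (Fin.init_snoc (α := fun _ => α) _ _))
    (Fin.snoc_last (α := fun _ => α) _ _)

lemma Fin.card_subtype_of_snoc_iff [Finite α] (h : ∀ g x, P (Fin.snoc g x) ↔ Q g ∧ R g x)
    {N : ℕ} (hR : ∀ g, Q g → Nat.card {x // R g x} = N) :
    Nat.card {f // P f} = Nat.card {g // Q g} * N := by
  have := Fintype.ofFinite {g // Q g}
  rw [Nat.card_congr (Fin.snocSubtypeEquiv h), Nat.card_sigma,
    Finset.sum_congr rfl fun g _ => hR g.1 g.2, Finset.sum_const, Finset.card_univ,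
    smul_eq_mul, Nat.card_eq_fintype_card]

end SnocSubtype

lemma ZMod.card_modEq_val {m d : ℕ} [NeZero m] (hd : d ∣ m) (r : ℕ) :
    Nat.card {x : ZMod m // r ≡ x.val [MOD d]} = m / d := by
  have hd0 : 0 < d := Nat.pos_of_dvd_of_pos hd (NeZero.pos m)
  have hlt : ∀ t < m / d, r % d + t * d < m := fun t ht =>
    calc r % d + t * d < (t + 1) * d := by
          rw [add_mul, one_mul, add_comm]; exact Nat.add_lt_add_left (Nat.mod_lt r hd0) _
      _ ≤ m / d * d := Nat.mul_le_mul_right d ht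
      _ = m := Nat.div_mul_cancel hd
  let quotientEquiv : {x : ZMod m // r ≡ x.val [MOD d]} ≃ Fin (m / d) :=
    { toFun x := ⟨x.1.val / d, Nat.div_lt_div_of_lt_of_dvd hd x.1.val_lt⟩
      invFun t := ⟨(r % d + t * d : ℕ), by
        rw [ZMod.val_cast_of_lt (hlt t t.2), Nat.ModEq, Nat.add_mul_mod_self_right, Nat.mod_mod]⟩
      left_inv x := Subtype.ext <| by
        simp only
        rw [x.2, Nat.mod_add_div', ZMod.natCast_zmod_val]
      right_inv t := Fin.ext <| by
        simp only
        rw [ZMod.val_cast_of_lt (hlt t t.2), Nat.add_mul_div_right _ _ hd0,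
          Nat.div_eq_of_lt (Nat.mod_lt r hd0), zero_add] }
  rw [Nat.card_congr quotientEquiv, Nat.card_eq_fintype_card, Fintype.card_fin]

-- `f i` is the value at `i`; for `m ≠ 0`, comparing `val`s mod `d` compares images in `ZMod d`.
def CongPresFin (m n : ℕ) (f : Fin n → ZMod m) : Prop :=
  ∀ d, d ∣ m → ∀ a b : Fin n, (a : ℕ) ≡ b [MOD d] → (f a).val ≡ (f b).val [MOD d]

def IsCongPresExtension {m n : ℕ} (g : Fin n → ZMod m) (x : ZMod m) : Prop :=
  ∀ d, d ∣ m → ∀ a : Fin n, (a : ℕ) ≡ n [MOD d] → (g a).val ≡ x.val [MOD d]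

lemma congPresFin_snoc_iff {m n : ℕ} (g : Fin n → ZMod m) (x : ZMod m) :
    CongPresFin m (n + 1) (Fin.snoc g x) ↔ CongPresFin m n g ∧ IsCongPresExtension g x := by
  refine ⟨fun h => ⟨fun d hd a b hab => ?_, fun d hd a ha => ?_⟩,
    fun ⟨hg, hx⟩ d hd a b hab => ?_⟩
  · simpa using h d hd a.castSucc b.castSucc hab
  · simpa using h d hd a.castSucc (Fin.last n) ha
  · induction a using Fin.lastCases <;> induction b using Fin.lastCases <;>
      simp only [Fin.snoc_castSucc, Fin.snoc_last, Fin.val_last, Fin.val_castSucc] at hab ⊢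
    · rfl
    · exact (hx d hd _ hab.symm).symm
    · exact hx d hd _ hab
    · exact hg d hd _ _ hab

lemma dvd_pow_min_log {p e n d : ℕ} (hp : p.Prime) (hd : d ∣ p ^ e) (hdn : d ≤ n) :
    d ∣ p ^ min e (Nat.log p n) := by
  obtain ⟨j, hj, rfl⟩ := (Nat.dvd_prime_pow hp).1 hd
  exact pow_dvd_pow p (le_min hj (Nat.le_log_of_pow_le hp.one_lt hdn))

lemma exists_isCongPresExtension_iff {p e n : ℕ} (hp : p.Prime) (hn : n ≠ 0)
    {g : Fin n → ZMod (p ^ e)} (hg : CongPresFin (p ^ e) n g) :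
    ∃ r, ∀ x, IsCongPresExtension g x ↔ r ≡ x.val [MOD p ^ min e (Nat.log p n)] := by
  set q := p ^ min e (Nat.log p n)
  have hqn : q ≤ n := (Nat.pow_le_pow_right hp.pos (min_le_right _ _)).trans
    (Nat.pow_log_le_self p hn)
  have hq0 : 0 < q := pow_pos hp.pos _
  let a₀ : Fin n := ⟨n - q, Nat.sub_lt (Nat.pos_of_ne_zero hn) hq0⟩
  have ha₀ : (a₀ : ℕ) ≡ n [MOD q] := (Nat.modEq_iff_dvd' (Nat.sub_le n q)).2 (by
    rw [Nat.sub_sub_self hqn])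
  refine ⟨(g a₀).val, fun x => ⟨fun hx => hx q (pow_dvd_pow p (min_le_left _ _)) a₀ ha₀,
    fun hx d hd a ha => ?_⟩⟩
  have hdq : d ∣ q := by
    have hda : d ∣ n - a := (Nat.modEq_iff_dvd' a.2.le).1 ha
    exact dvd_pow_min_log hp hd ((Nat.le_of_dvd (Nat.sub_pos_of_lt a.2) hda).trans (Nat.sub_le n a))
  exact (hg d hd a a₀ (ha.trans (ha₀.of_dvd hdq).symm)).trans (hx.of_dvd hdq)

lemma card_isCongPresExtension {p e n : ℕ} (hp : p.Prime) {g : Fin n → ZMod (p ^ e)}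
    (hg : CongPresFin (p ^ e) n g) :
    Nat.card {x // IsCongPresExtension g x} = p ^ (e - min e (Nat.log p n)) := by
  have : NeZero (p ^ e) := ⟨pow_ne_zero e hp.ne_zero⟩
  rcases eq_or_ne n 0 with rfl | hn
  · have hall : ∀ x, IsCongPresExtension g x := fun _ _ _ a => a.elim0
    rw [Nat.card_congr (Equiv.subtypeUnivEquiv hall), Nat.card_zmod, Nat.log_zero_right, min_zero,
      Nat.sub_zero]
  obtain ⟨r, hr⟩ := exists_isCongPresExtension_iff hp hn hg
  rw [Nat.card_congr (Equiv.subtypeEquivRight hr),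
    ZMod.card_modEq_val (pow_dvd_pow p (min_le_left _ _)), Nat.pow_div (min_le_left _ _) hp.pos]

lemma card_congPresFin {p e : ℕ} (hp : p.Prime) (n : ℕ) :
    Nat.card {f // CongPresFin (p ^ e) n f} =
      p ^ ∑ k ∈ Finset.range n, (e - min e (Nat.log p k)) := by
  have : NeZero (p ^ e) := ⟨pow_ne_zero e hp.ne_zero⟩
  induction n with
  | zero => simp [CongPresFin]
  | succ n ih =>
    rw [Fin.card_subtype_of_snoc_iff congPresFin_snoc_iff fun _ => card_isCongPresExtension hp,
      ih, ← pow_add, Finset.sum_range_succ]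

lemma ZMod.natCast_eq_mk {n a : ℕ} (ha : a < n + 1) : (a : ZMod (n + 1)) = ⟨a, ha⟩ :=
  Fin.ext (ZMod.val_cast_of_lt ha)

lemma CP_succ_eq_card_congPresFin (m n : ℕ) [NeZero m] :
    CP (n + 1) m = Nat.card {f // CongPresFin m (n + 1) f} := by
  refine Nat.card_congr (Equiv.subtypeEquivRight fun f => ?_)
  simp only [CongPres, CongPresFin, ZMod.castHom_apply, ← ZMod.natCast_val,
    ZMod.natCast_eq_natCast_iff, Fin.forall_iff]
  constructor
  · intro h d hd a ha b hb hab
    simpa only [ZMod.natCast_eq_mk ha, ZMod.natCast_eq_mk hb] using h d hd a b ha hb hab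
  · intro h d hd a b ha hb hab
    simpa only [ZMod.natCast_eq_mk ha, ZMod.natCast_eq_mk hb] using h d hd a ha b hb hab

lemma sum_range_tsub_min_log (p e n : ℕ) :
    ∑ k ∈ Finset.range n, (e - min e (Nat.log p k)) =
      e * n - ∑ k ∈ Finset.Icc 1 (n - 1), min e (Nat.log p k) := by
  rw [Finset.sum_tsub_distrib _ fun _ _ => min_le_left _ _, Finset.sum_const, Finset.card_range,
    smul_eq_mul, mul_comm]
  congr 1
  refine (Finset.sum_subset (fun k hk => ?_) fun k hk hk' => ?_).symm
  · simp only [Finset.mem_Icc, Finset.mem_range] at hk ⊢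
    omega
  · obtain rfl : k = 0 := by
      simp only [Finset.mem_Icc, Finset.mem_range] at hk hk'
      omega
    simp

theorem stmt_19_general (p e n : ℕ) (hp : p.Prime) (hn : 1 ≤ n) :
    CP n (p ^ e) =
      p ^ (e * n - ∑ k ∈ Finset.Icc 1 (n - 1), min e (Nat.log p k)) := by
  have : NeZero (p ^ e) := ⟨pow_ne_zero e hp.ne_zero⟩
  obtain ⟨n, rfl⟩ := Nat.exists_eq_add_of_le' hn
  rw [CP_succ_eq_card_congPresFin, card_congPresFin hp, sum_range_tsub_min_log]

theorem stmt_19 (p e n : ℕ) (hp : p.Prime) (he : 1 ≤ e) (hn : 1 ≤ n) :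
    CP n (p ^ e) =
      p ^ (e * n - ∑ k ∈ Finset.Icc 1 (n - 1), min e (Nat.log p k)) :=
  stmt_19_general p e n hp hn
end
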